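/- For a prime p with p = 12n − 1 (n ≥ 1), the rational number c = ((−1/12)_m (1/4)_m)/((2/3)_m · m!) · 1728^m evaluated at m = (p+1)/3 is p-integral and satisfies c ≡ −18 (mod p). -/

import Mathlib

open Finset

/-- Pochhammer symbol `(x)_m = x(x+1)⋯(x+m−1)`. -/
def poch (x : ℚ) : ℕ → ℚ
  | 0 => 1
  | m + 1 => poch x m * (x + m)

lemma poch_eq_prod (x : ℚ) (m : ℕ) : poch x m = ∏ k ∈ range m, (x + k) := by
  induction m with
  | zero => rfl
  | succ m ih => rw [prod_range_succ, ← ih]; rfl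

lemma prod_sub_eq_factorial (n : ℕ) : (∏ k ∈ range n, (n - k)) = n.factorial := by
  rw [← Finset.prod_range_add_one_eq_factorial, ← Finset.prod_range_reflect]
  exact Finset.prod_congr rfl fun j hj => by
    have := Finset.mem_range.mp hj; omega

lemma fact_shift (a : ℕ) : ∀ t : ℕ, a.factorial * ∏ k ∈ range t, (a + 1 + k) = (a + t).factorial
  | 0 => by simp
  | t + 1 => by
    rw [prod_range_succ, ← mul_assoc, fact_shift a t, show a + (t+1) = (a+t)+1 by ring,
      Nat.factorial_succ]
    ring

lemma dbl_nat : ∀ k : ℕ, (2*k).factorial = 2^k * k.factorial * ∏ i ∈ range k, (2*i+1)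
  | 0 => by simp
  | k + 1 => by
    rw [prod_range_succ, show 2*(k+1) = (2*k+1)+1 by ring, Nat.factorial_succ,
      show (2*k+1) = (2*k)+1 by rfl, Nat.factorial_succ, dbl_nat k, Nat.factorial_succ]
    ring

section Aux

variable {n p : ℕ} [hp : Fact p.Prime]

lemma fact_ne {k : ℕ} (hk : k < p) : ((k.factorial : ℕ) : ZMod p) ≠ 0 := by
  rw [Ne, ZMod.natCast_eq_zero_iff, hp.out.dvd_factorial]
  omega

lemma wilson_refl : ∀ a b : ℕ, a + b = p - 1 →
    ((a.factorial : ℕ) : ZMod p) * ((b.factorial : ℕ) : ZMod p) = (-1)^(a+1)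
  | 0, b, hab => by
    have hb : b = p - 1 := by omega
    subst hb
    simpa using ZMod.wilsons_lemma p
  | a+1, b, hab => by
    have ih := wilson_refl a (b+1) (by have := hp.out.two_le; omega)
    have hs : ((a:ZMod p) + 1) + ((b:ZMod p) + 1) = 0 := by
      have h1 : (a+1)+(b+1) = p := by have := hp.out.two_le; omega
      have h2 := congrArg (Nat.cast : ℕ → ZMod p) h1
      push_cast at h2
      rw [h2, ZMod.natCast_self]
    rw [Nat.factorial_succ] at ih ⊢
    push_cast at ih ⊢
    linear_combination (-1 : ZMod p) * ih + ((a.factorial : ZMod p) * (b.factorial : ZMod p)) * hs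

lemma two_ne (hpn : p = 12*n - 1) (hn : 1 ≤ n) : (2 : ZMod p) ≠ 0 := by
  have h2 : ((2:ℕ) : ZMod p) ≠ 0 := by
    rw [Ne, ZMod.natCast_eq_zero_iff]
    intro h
    have := Nat.le_of_dvd (by norm_num) h
    omega
  simpa using h2

lemma three_ne (hpn : p = 12*n - 1) (hn : 1 ≤ n) : (3 : ZMod p) ≠ 0 := by
  have h2 : ((3:ℕ) : ZMod p) ≠ 0 := by
    rw [Ne, ZMod.natCast_eq_zero_iff]
    intro h
    have := Nat.le_of_dvd (by norm_num) h
    omega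
  simpa using h2

lemma odd_shift (hpn : p = 12*n - 1) (hn : 1 ≤ n) : ∀ j : ℕ,
    (2 : ZMod p)^(6*n-1+j) * (((6*n-1+j).factorial : ℕ) : ZMod p)
      = 2^(6*n-1) * (((6*n-1).factorial : ℕ) : ZMod p) * ∏ i ∈ range j, ((2*i+1 : ℕ) : ZMod p)
  | 0 => by simp
  | j + 1 => by
    have ih := odd_shift hpn hn j
    have key : ((2*(6*n+j) : ℕ) : ZMod p) = ((2*j+1 : ℕ) : ZMod p) := by
      rw [show 2*(6*n+j) = p + (2*j+1) by omega]
      push_cast [ZMod.natCast_self]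
      ring
    have h6 : (((6*n-1 : ℕ)) : ZMod p) = 6*(n:ZMod p) - 1 := by
      rw [Nat.cast_sub (by omega), Nat.cast_mul]
      push_cast
      ring
    rw [show 6*n-1+(j+1) = (6*n-1+j)+1 by omega, Nat.factorial_succ, prod_range_succ, pow_succ]
    push_cast [h6] at key ih ⊢
    linear_combination (2*(j:ZMod p)+1) * ih
      + (((6*n-1+j).factorial : ℕ) : ZMod p) * (2:ZMod p)^(6*n-1+j) * key

lemma dbl_shift (hpn : p = 12*n - 1) (hn : 1 ≤ n) (k : ℕ) :
    (((6*n-1).factorial : ℕ) : ZMod p) * (((2*k).factorial : ℕ) : ZMod p)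
      = 2^(2*k) * ((k.factorial : ℕ) : ZMod p) * (((6*n-1+k).factorial : ℕ) : ZMod p) := by
  have hd := congrArg (Nat.cast : ℕ → ZMod p) (dbl_nat k)
  push_cast at hd
  have hos := odd_shift hpn hn k
  push_cast at hos
  apply mul_left_cancel₀ (pow_ne_zero (6*n-1) (two_ne hpn hn))
  linear_combination ((2:ZMod p)^(6*n-1) * (((6*n-1).factorial : ℕ) : ZMod p)) * hd
    - ((2:ZMod p)^k * ((k.factorial : ℕ) : ZMod p)) * hos

lemma euler_two (hpn : p = 12*n - 1) (hn : 1 ≤ n) :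
    (2 : ZMod p)^(6*n-1) = (-1)^n := by
  have hp2 : p ≠ 2 := by omega
  have h := (legendreSym.eq_pow p 2).symm
  rw [legendreSym.at_two hp2, ZMod.χ₈_nat_eq_if_mod_eight] at h
  have hd2 : p / 2 = 6*n - 1 := by omega
  rw [hd2] at h
  rcases Nat.even_or_odd n with he | ho
  · obtain ⟨m, rfl⟩ := he
    have h8 : p % 8 = 7 := by omega
    have h2 : p % 2 = 1 := by omega
    rw [h2, h8] at h
    norm_num at h
    rw [h, Even.neg_one_pow (by exact ⟨m, rfl⟩)]
  · obtain ⟨m, rfl⟩ := ho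
    have h8 : p % 8 = 3 := by omega
    have h2 : p % 2 = 1 := by omega
    rw [h2, h8] at h
    norm_num at h
    rw [h, Odd.neg_one_pow (by exact ⟨m, rfl⟩)]

lemma crux (hpn : p = 12*n - 1) (hn : 1 ≤ n) :
    2 * ((n.factorial : ℕ) : ZMod p) * (((7*n-1).factorial : ℕ) : ZMod p)
      = (-1)^n * (((4*n-1).factorial : ℕ) : ZMod p) * (((4*n).factorial : ℕ) : ZMod p) := by
  set K := ZMod p
  have hple : 2 ≤ p := hp.out.two_le
  have h2 : (2 : K) ≠ 0 := two_ne hpn hn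
  have h1 := dbl_shift hpn hn n
  rw [show 6*n-1+n = 7*n-1 by omega] at h1
  have h2' := dbl_shift hpn hn (2*n)
  rw [show 2*(2*n) = 4*n by ring, show 6*n-1+2*n = 8*n-1 by omega] at h2'
  have h3 := wilson_refl (p := p) (4*n-1) (8*n-1) (by omega)
  rw [show 4*n-1+1 = 4*n by omega] at h3
  have h3' : (((4*n-1).factorial : ℕ) : K) * (((8*n-1).factorial : ℕ) : K) = 1 := by
    rw [h3, Even.neg_one_pow ⟨2*n, by ring⟩]
  have h4 := wilson_refl (p := p) (6*n-1) (6*n-1) (by omega)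
  rw [show 6*n-1+1 = 6*n by omega] at h4
  have h4' : (((6*n-1).factorial : ℕ) : K) * (((6*n-1).factorial : ℕ) : K) = 1 := by
    rw [h4, Even.neg_one_pow ⟨3*n, by ring⟩]
  have h5 := euler_two hpn hn
  have h5' : (2 : K)^(6*n) = 2 * (-1)^n := by
    rw [show 6*n = (6*n-1)+1 by omega, pow_succ, h5]
    ring
  set F1 := ((n.factorial : ℕ) : K)
  set F2 := (((2*n).factorial : ℕ) : K)
  set F4 := (((4*n).factorial : ℕ) : K)
  set F4' := (((4*n-1).factorial : ℕ) : K)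
  set F6 := (((6*n-1).factorial : ℕ) : K)
  set F7 := (((7*n-1).factorial : ℕ) : K)
  set F8 := (((8*n-1).factorial : ℕ) : K)
  have hne1 : (2:K)^(2*n) * F6 ≠ 0 :=
    mul_ne_zero (pow_ne_zero _ h2) (fact_ne (p := p) (by omega))
  have hne2 : (2:K)^(4*n) * F8 ≠ 0 :=
    mul_ne_zero (pow_ne_zero _ h2) (fact_ne (p := p) (by omega))
  have heps : ((-1:K))^n * (-1)^n = 1 := by
    rw [← pow_add]
    exact Even.neg_one_pow ⟨n, rfl⟩
  have lhs1 : (2:K)^(2*n) * F6 * (2 * F1 * F7) = 2 * F2 := by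
    linear_combination (-2*F6) * h1 + (2*F2) * h4'
  have rhs1 : (2:K)^(2*n) * F6 * ((-1)^n * F4' * F4) = 2 * F2 := by
    apply mul_left_cancel₀ hne2
    linear_combination ((-1:K)^n*2^(6*n)*F6*F4)*h3' + ((-1:K)^n*F6*F4)*h5'
      + (2*F6*F4)*heps + 2*h2'
  exact mul_left_cancel₀ hne1 (lhs1.trans rhs1.symm)

end Aux

/-- For a prime `p = 12n − 1` (`n ≥ 1`), the rational number
`((−1/12)_m (1/4)_m)/((2/3)_m m!) · 1728^m` at `m = (p+1)/3` is `p`-integral and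
congruent to `−18 mod p`. -/
theorem stmt_17 (n p : ℕ) [Fact p.Prime] (hn : 1 ≤ n) (hpn : p = 12 * n - 1)
    (c : ℚ)
    (hc : c = poch (-1/12) ((p + 1) / 3) * poch (1/4) ((p + 1) / 3) /
        (poch (2/3) ((p + 1) / 3) * ((p + 1) / 3).factorial) * 1728 ^ ((p + 1) / 3)) :
    ¬ (p ∣ c.den) ∧ ((c : ZMod p) = -18) := by
  have hm : (p + 1) / 3 = 4*n := by omega
  rw [hm] at hc
  set m := 4*n with hm4
  -- rational-level products
  set pA := poch (-1/12) m with hpA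
  set pB := poch (1/4) m with hpB
  set pC := poch (2/3) m with hpC
  set Aq := ∏ k ∈ range m, (12*(k:ℚ) - 1) with hAq'
  set Bq := ∏ k ∈ range m, (4*(k:ℚ) + 1) with hBq'
  set Cq := ∏ k ∈ range m, (3*(k:ℚ) + 2) with hCq'
  have hAq : (12:ℚ)^m * pA = Aq := by
    rw [hpA, poch_eq_prod, hAq']
    rw [Finset.pow_eq_prod_const, ← Finset.prod_mul_distrib]
    exact Finset.prod_congr rfl fun k _ => by ring
  have hBq : (4:ℚ)^m * pB = Bq := by
    rw [hpB, poch_eq_prod, hBq']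
    rw [Finset.pow_eq_prod_const, ← Finset.prod_mul_distrib]
    exact Finset.prod_congr rfl fun k _ => by ring
  have hCq : (3:ℚ)^m * pC = Cq := by
    rw [hpC, poch_eq_prod, hCq']
    rw [Finset.pow_eq_prod_const, ← Finset.prod_mul_distrib]
    exact Finset.prod_congr rfl fun k _ => by ring
  have hCq0 : Cq ≠ 0 := by
    rw [hCq']
    apply Finset.prod_ne_zero_iff.mpr
    intro k _
    positivity
  have hpC0 : pC ≠ 0 := by
    intro h
    apply hCq0
    rw [← hCq, h, mul_zero]
  have hf0 : ((m.factorial : ℕ) : ℚ) ≠ 0 := Nat.cast_ne_zero.mpr (Nat.factorial_ne_zero _)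
  have hc' : c * (pC * ((m.factorial : ℕ) : ℚ)) = pA * pB * 1728^m := by
    rw [hc]
    field_simp
  have hnum : (1728:ℚ)^m * 3^m = 12^m * 4^m * 108^m := by
    rw [← mul_pow, ← mul_pow, ← mul_pow]
    norm_num
  have hEq : c * (Cq * ((m.factorial : ℕ) : ℚ)) = Aq * Bq * 108^m := by
    linear_combination ((3:ℚ)^m)*hc' + (-(c*((m.factorial : ℕ) : ℚ)))*hCq + (pA*pB)*hnum
      + ((108:ℚ)^m*4^m*pB)*hAq + ((108:ℚ)^m*Aq)*hBq
  -- split Aq, Cq at the factor p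
  have hpq : ((p:ℕ):ℚ) = 12*(n:ℚ) - 1 := by
    rw [hpn, Nat.cast_sub (by omega : 1 ≤ 12*n)]
    push_cast
    ring
  have hAsplit : Aq = (∏ k ∈ range n, (12*(k:ℚ) - 1)) *
      ((∏ k ∈ range (3*n-1), (12*((k:ℚ) + (n:ℚ) + 1) - 1)) * (p:ℚ)) := by
    rw [hAq', hm4, show 4*n = n + 3*n by ring, Finset.prod_range_add,
      show 3*n = (3*n-1)+1 by omega, Finset.prod_range_succ']
    congr 1
    congr 1
    · exact Finset.prod_congr rfl fun k _ => by push_cast; ring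
    · rw [hpq]; push_cast; ring
  have hCsplit : Cq = (∏ k ∈ range (4*n-1), (3*(k:ℚ) + 2)) * (p:ℚ) := by
    rw [hCq', hm4, show 4*n = (4*n-1)+1 by omega, Finset.prod_range_succ]
    congr 1
    rw [hpq, Nat.cast_sub (by omega : 1 ≤ 4*n)]
    push_cast
    ring
  -- integer numerator and denominator
  set Nz : ℤ := (∏ k ∈ range n, (12*(k:ℤ) - 1)) *
      (∏ k ∈ range (3*n-1), (12*((k:ℤ) + (n:ℤ) + 1) - 1)) *
      (∏ k ∈ range m, (4*(k:ℤ) + 1)) * 108^m with hNz'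
  set Dz : ℤ := (∏ k ∈ range (4*n-1), (3*(k:ℤ) + 2)) * (m.factorial : ℤ) with hDz'
  have hNcast : ((Nz : ℤ) : ℚ) = (∏ k ∈ range n, (12*(k:ℚ) - 1)) *
      (∏ k ∈ range (3*n-1), (12*((k:ℚ) + (n:ℚ) + 1) - 1)) * Bq * 108^m := by
    rw [hNz', hBq']
    push_cast
    ring
  have hDcast : ((Dz : ℤ) : ℚ) = (∏ k ∈ range (4*n-1), (3*(k:ℚ) + 2)) *
      ((m.factorial : ℕ) : ℚ) := by
    rw [hDz']
    push_cast
    ring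
  have hp0q : ((p:ℕ):ℚ) ≠ 0 := Nat.cast_ne_zero.mpr (by omega)
  have hcD : c * ((Dz:ℤ):ℚ) = ((Nz:ℤ):ℚ) := by
    apply mul_right_cancel₀ hp0q
    linear_combination (c*((p:ℕ):ℚ))*hDcast + (-((p:ℕ):ℚ))*hNcast
      + (-(c*((m.factorial:ℕ):ℚ)))*hCsplit + hEq + (Bq*(108:ℚ)^m)*hAsplit
  have hDzpos : 0 < Dz := by
    rw [hDz']
    apply mul_pos
    · apply Finset.prod_pos
      intro i _
      positivity
    · exact_mod_cast Nat.factorial_pos m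
  have hDq0 : ((Dz:ℤ):ℚ) ≠ 0 := by exact_mod_cast hDzpos.ne'
  -- the ZMod p computation
  set K := ZMod p with hK
  have hpK : ((p:ℕ):K) = 0 := ZMod.natCast_self p
  have h1 : (12:K)*((n:ℕ):K) = 1 := by
    have h0 : ((12*n - 1 : ℕ):K) = 0 := by rw [← hpn]; exact hpK
    rw [Nat.cast_sub (by omega), Nat.cast_mul, Nat.cast_ofNat, Nat.cast_one] at h0
    push_cast at h0
    linear_combination h0
  have h2K : (2:K) ≠ 0 := two_ne hpn hn
  have h3K : (3:K) ≠ 0 := three_ne hpn hn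
  set F1 := ((n.factorial : ℕ) : K) with hF1
  set F3 := (((3*n-1).factorial : ℕ) : K) with hF3
  set F4 := (((4*n).factorial : ℕ) : K) with hF4
  set F4' := (((4*n-1).factorial : ℕ) : K) with hF4'
  set F7 := (((7*n-1).factorial : ℕ) : K) with hF7
  set G := ∏ k ∈ range m, (3*((n:ℕ):K) + ((k:ℕ):K)) with hGdef
  have hG : F3 * G = F7 := by
    have hfs := fact_shift (3*n-1) (4*n)
    rw [show 3*n-1+1 = 3*n by omega, show 3*n-1+4*n = 7*n-1 by omega] at hfs
    have := congrArg (Nat.cast : ℕ → K) hfs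
    rw [Nat.cast_mul (α := K), Nat.cast_prod (R := K)] at this
    rw [hF3, hF7, hGdef, hm4, ← this]
    congr 1
    exact Finset.prod_congr rfl fun k _ => by
      rw [Nat.cast_add (R := K), Nat.cast_mul (α := K), Nat.cast_ofNat]
  have hP1K : (∏ k ∈ range n, (12*((k:ℕ):K) - 1)) = (-1)^n * 2^(2*n) * 3^n * F1 := by
    have hterm : ∀ k ∈ range n, 12*((k:ℕ):K) - 1 = (-12) * (((n-k : ℕ)):K) := by
      intro k hk
      have hk' := Finset.mem_range.mp hk
      rw [Nat.cast_sub hk'.le]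
      linear_combination h1
    rw [Finset.prod_congr rfl hterm, Finset.prod_mul_distrib, Finset.prod_const,
      Finset.card_range, ← Nat.cast_prod (R := K), prod_sub_eq_factorial,
      show (-12:K) = (-1)*(2^2*3) by norm_num, mul_pow, mul_pow, ← pow_mul]
    rw [hF1]
    ring
  have hP3K : (∏ k ∈ range (3*n-1), (12*(((k:ℕ):K) + ((n:ℕ):K) + 1) - 1))
      = 12^(3*n-1) * F3 := by
    have hterm : ∀ k ∈ range (3*n-1), 12*(((k:ℕ):K) + ((n:ℕ):K) + 1) - 1
        = 12 * (((k+1 : ℕ)):K) := by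
      intro k _
      push_cast
      linear_combination h1
    rw [Finset.prod_congr rfl hterm, Finset.prod_mul_distrib, Finset.prod_const,
      Finset.card_range, ← Nat.cast_prod (R := K), Finset.prod_range_add_one_eq_factorial]
  have hBKp : (∏ k ∈ range m, (4*((k:ℕ):K) + 1)) = 2^(8*n) * G := by
    have hterm : ∀ k ∈ range m, 4*((k:ℕ):K) + 1 = 4 * (3*((n:ℕ):K) + ((k:ℕ):K)) := by
      intro k _
      linear_combination (-1 : K) * h1
    rw [Finset.prod_congr rfl hterm, Finset.prod_mul_distrib, Finset.prod_const,
      Finset.card_range, hGdef, hm4, show (4:K) = 2^2 by norm_num, ← pow_mul,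
      show 2*(4*n) = 8*n by ring]
  have hCKp : (∏ k ∈ range (4*n-1), (3*((k:ℕ):K) + 2)) = (-3)^(4*n-1) * F4' := by
    have hc4 : 3*(((4*n-1:ℕ)):K) + 2 = 0 := by
      have h0 : ((3*(4*n-1)+2 : ℕ) : K) = 0 := by
        rw [show 3*(4*n-1)+2 = p by omega]
        exact hpK
      rw [Nat.cast_add, Nat.cast_mul, Nat.cast_ofNat, Nat.cast_ofNat] at h0
      push_cast at h0
      linear_combination h0
    have hterm : ∀ k ∈ range (4*n-1), 3*((k:ℕ):K) + 2 = (-3) * (((4*n-1-k : ℕ)):K) := by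
      intro k hk
      have hk' := Finset.mem_range.mp hk
      rw [Nat.cast_sub hk'.le]
      linear_combination hc4
    rw [Finset.prod_congr rfl hterm, Finset.prod_mul_distrib, Finset.prod_const,
      Finset.card_range, ← Nat.cast_prod (R := K), prod_sub_eq_factorial]
  -- power bookkeeping
  have hfermat2 : (2:K)^(12*n) = 4 := by
    have hf := ZMod.pow_card_sub_one_eq_one h2K
    rw [show p-1 = 12*n-2 by omega] at hf
    rw [show 12*n = (12*n-2)+2 by omega, pow_add, hf]
    norm_num
  have hfermat3 : (3:K)^(12*n) = 9 := by
    have hf := ZMod.pow_card_sub_one_eq_one h3K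
    rw [show p-1 = 12*n-2 by omega] at hf
    rw [show 12*n = (12*n-2)+2 by omega, pow_add, hf]
    norm_num
  have h12pow : (12:K)^(3*n-1) * 12 = 2^(6*n) * 3^(3*n) := by
    rw [← pow_succ, show 3*n-1+1 = 3*n by omega, show (12:K) = 2^2*3 by norm_num,
      mul_pow, ← pow_mul, show 2*(3*n) = 6*n by ring]
  have h3pow : (-3:K)^(4*n-1) * 3 = -(3:K)^(4*n) := by
    have hps : (3:K)^(4*n-1)*3 = 3^(4*n) := by
      rw [← pow_succ, show 4*n-1+1 = 4*n by omega]
    rw [neg_pow, Odd.neg_one_pow ⟨2*n-1, by omega⟩]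
    linear_combination (-1:K) * hps
  have h108pow : ((108:K))^m = 2^(8*n)*3^(12*n) := by
    rw [hm4, show (108:K) = 2^2*3^3 by norm_num, mul_pow, ← pow_mul, ← pow_mul,
      show 2*(4*n) = 8*n by ring, show 3*(4*n) = 12*n by ring]
  have heps : ((-1:K))^n * (-1)^n = 1 := by
    rw [← pow_add]
    exact Even.neg_one_pow ⟨n, rfl⟩
  have hcruxK := crux hpn hn
  rw [show ((n.factorial : ℕ) : ZMod p) = F1 from rfl,
    show (((7*n-1).factorial : ℕ) : ZMod p) = F7 from rfl,
    show (((4*n-1).factorial : ℕ) : ZMod p) = F4' from rfl,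
    show (((4*n).factorial : ℕ) : ZMod p) = F4 from rfl] at hcruxK
  have hNcastK : ((Nz:ℤ):K) = ((-1)^n * 2^(2*n) * 3^n * F1) * (12^(3*n-1) * F3)
      * (2^(8*n) * G) * (2^(8*n)*3^(12*n)) := by
    rw [hNz']
    push_cast
    rw [hP1K, hP3K, hBKp, h108pow]
  have hfK : ((m.factorial : ℕ) : K) = F4 := by rw [hF4, hm4]
  have hDcastK : ((Dz:ℤ):K) = ((-3)^(4*n-1) * F4') * F4 := by
    rw [hDz']
    push_cast
    rw [hCKp, hfK]
  have h72 : (72:K) ≠ 0 := by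
    have : (72:K) = 2^3*3^2 := by norm_num
    rw [this]
    exact mul_ne_zero (pow_ne_zero _ h2K) (pow_ne_zero _ h3K)
  have hNKval : ((Nz:ℤ):K) = -18 * ((Dz:ℤ):K) := by
    rw [hNcastK, hDcastK]
    apply mul_right_cancel₀ h72
    linear_combination
      ((-1:K)^n*2^(2*n)*3^n*F1*F3*2^(8*n)*G*2^(8*n)*3^(12*n)*6) * h12pow
      + ((-1:K)^n*2^(2*n)*3^n*F1*2^(6*n)*3^(3*n)*2^(16*n)*3^(12*n)*6) * hG
      + (3*(2:K)^(24*n)*3^(16*n)*(-1:K)^n) * hcruxK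
      + (3*(2:K)^(24*n)*3^(16*n)*F4'*F4) * heps
      + (3*((2:K)^(12*n)+4)*3^(16*n)*F4'*F4) * hfermat2
      + (48*(3:K)^(4*n)*F4'*F4) * hfermat3
      + (432*F4'*F4) * h3pow
  -- denominator is p-integral
  have hcdiv : c = ((Nz:ℤ):ℚ) / ((Dz:ℤ):ℚ) := (eq_div_iff hDq0).mpr hcD
  have hdvd : ((c.den : ℤ)) ∣ Dz := by
    have hdd := Rat.den_dvd Nz Dz
    rw [Rat.divInt_eq_div, ← hcdiv] at hdd
    exact hdd
  have hDK0 : ((Dz:ℤ):K) ≠ 0 := by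
    rw [hDcastK]
    exact mul_ne_zero (mul_ne_zero (pow_ne_zero _ (neg_ne_zero.mpr h3K))
      (fact_ne (p := p) (by omega))) (fact_ne (p := p) (by omega))
  have hpden : ¬ p ∣ c.den := by
    intro h
    apply hDK0
    rw [ZMod.intCast_zmod_eq_zero_iff_dvd]
    exact dvd_trans (Int.natCast_dvd_natCast.mpr h) hdvd
  refine ⟨hpden, ?_⟩
  -- the congruence
  have hden0q : ((c.den:ℕ):ℚ) ≠ 0 := Nat.cast_ne_zero.mpr c.den_nz
  have hcnum : (c.num : ℚ) * ((Dz:ℤ):ℚ) = ((Nz:ℤ):ℚ) * ((c.den:ℕ) : ℚ) := by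
    have h := hcD
    rw [← Rat.num_div_den c] at h
    field_simp at h
    linear_combination h
  have hint : c.num * Dz = Nz * (c.den : ℤ) := by exact_mod_cast hcnum
  have hKe := congrArg (Int.cast : ℤ → ZMod p) hint
  push_cast at hKe
  have hdenK0 : ((c.den:ℕ):K) ≠ 0 := by
    rw [Ne, ZMod.natCast_eq_zero_iff]
    exact hpden
  rw [Rat.cast_def, div_eq_iff hdenK0]
  apply mul_right_cancel₀ hDK0
  linear_combination hKe + ((c.den:ℕ):K)*hNKval
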